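/- arXiv:1707.03845 — 3 statements merged into one kernel-verified Lean document; each statement's English description precedes it below -/
import Mathlib

section
/- An admissible multidegree (w, μ) on (Γ, 𝐧) is concentrated at a vertex v₀ ∈ V(Γ) if and only if the induced multidegree w̃ on the subdivided graph Γ̃ is concentrated at v₀ (as a multidegree on Γ̃ with the trivial chain structure). -/
/-!
Both notions of concentration are recast through rank functions. An ordering as in the
definition exists iff there is `r : V → ℕ` vanishing exactly at `v₀` such that each other
vertex `x` carries fewer chips than there are edges joining it to vertices of smaller rank
(for twists: only the edges `e` with `μ(e) = 0` count); such an ordering is obtained by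
sorting by `r`, and conversely an ordering gives an injective rank.

On the chain of `Γ̃` over an edge `e`, every interior vertex needs more lower-ranked
neighbours than its number of chips. Hence, if the rank decreases from an endpoint of `e` into
the chain, it keeps decreasing all the way to the other endpoint, and the chain carries no
chip, i.e. `μ(e) = 0`. So a rank on `Γ̃` restricts to a rank on `Γ`. Conversely, an injective
rank `r` on `Γ` extends to `Γ̃` by `M * r` on old vertices, with `M` larger than every chain
length, and on each chain by ranks rising away from either endpoint, split just past the chip.
-/

open scoped Classical

namespace LLS

variable {V E : Type*}

/-- `σ(e,v)`: `1` if `v` is the tail of `e`, `-1` if `v` is the head of `e`, `0` otherwise. -/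
noncomputable def sigma (tail head : E → V) (e : E) (v : V) : ℤ :=
  if tail e = v then 1 else if head e = v then -1 else 0

/-- The endpoint of `e` other than `v` (for `e` adjacent to `v`). -/
noncomputable def otherEnd (tail head : E → V) (e : E) (v : V) : V :=
  if tail e = v then head e else tail e

/-- The multigraph is loopless. -/
def Loopless (tail head : E → V) : Prop := ∀ e, tail e ≠ head e

/-- The multigraph is connected. -/
def MGConnected (tail head : E → V) : Prop :=
  ∀ u v : V, Relation.ReflTransGen
    (fun a b => ∃ e, (tail e = a ∧ head e = b) ∨ (tail e = b ∧ head e = a)) u v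

/-- An admissible multidegree on `(Γ, 𝐧)`: a function `V(Γ) → ℤ` together with an
element `μ(e) ∈ ℤ/𝐧(e)ℤ` for each edge `e`. -/
structure AdmMD (V E : Type*) (n : E → ℕ) where
  wV : V → ℤ
  mu : ∀ e : E, ZMod (n e)

section FinGraph

variable [Fintype V] [Fintype E] [DecidableEq V] [DecidableEq E]

/-- The twist of an admissible multidegree at a vertex `v`. -/
noncomputable def twist (tail head : E → V) (n : E → ℕ) (w : AdmMD V E n) (v : V) :
    AdmMD V E n where
  wV u := w.wV u
    - (if u = v then ((Finset.univ.filter fun e : E =>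
        sigma tail head e v ≠ 0 ∧ w.mu e = 0).card : ℤ) else 0)
    + ((Finset.univ.filter fun e : E => sigma tail head e v ≠ 0 ∧
        w.mu e + (sigma tail head e v : ZMod (n e)) = 0 ∧
        otherEnd tail head e v = u).card : ℤ)
  mu e := w.mu e + (sigma tail head e v : ZMod (n e))

/-- The negative twist of an admissible multidegree at a vertex `v`
(the inverse of `twist`). -/
noncomputable def negTwist (tail head : E → V) (n : E → ℕ) (w : AdmMD V E n) (v : V) :
    AdmMD V E n where
  wV u := w.wV u
    + (if u = v then ((Finset.univ.filter fun e : E => sigma tail head e v ≠ 0 ∧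
        w.mu e - (sigma tail head e v : ZMod (n e)) = 0).card : ℤ) else 0)
    - ((Finset.univ.filter fun e : E => sigma tail head e v ≠ 0 ∧
        w.mu e = 0 ∧ otherEnd tail head e v = u).card : ℤ)
  mu e := w.mu e - (sigma tail head e v : ZMod (n e))

/-- An admissible multidegree is concentrated at `v` if there is an ordering of all
vertices starting with `v` such that composing the negative twists at all previous
vertices makes the multidegree negative at each subsequent vertex. -/
def Concentrated (tail head : E → V) (n : E → ℕ) (w : AdmMD V E n) (v : V) : Prop :=
  ∃ l : List V, l.Nodup ∧ (∀ x : V, x ∈ l) ∧ l.head? = some v ∧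
    ∀ (i : ℕ) (h : i < l.length), 0 < i →
      (((l.take i).foldl (negTwist tail head n) w).wV (l.get ⟨i, h⟩)) < 0

/-- `w` is obtained from `w₀` by a finite sequence of twists, i.e. `w ∈ V(G(w₀))`. -/
def TwistSeq (tail head : E → V) (n : E → ℕ) (w₀ w : AdmMD V E n) : Prop :=
  ∃ l : List V, l.foldl (twist tail head n) w₀ = w

/-- `l` records the successive twist vertices of a minimal path from `w` to `w'`
in `G(w₀)`. -/
def IsMinPath (tail head : E → V) (n : E → ℕ) (w w' : AdmMD V E n) (l : List V) : Prop :=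
  l.foldl (twist tail head n) w = w' ∧
    ∀ l' : List V, l'.foldl (twist tail head n) w = w' → l.length ≤ l'.length

/-- The membership condition describing the subgraph `Ḡ(w₀)` of `G(w₀)`:
no minimal path from `w` to `w_v` involves twisting at `v`. -/
def InBarG (tail head : E → V) (n : E → ℕ) (w₀ : AdmMD V E n) (wv : V → AdmMD V E n)
    (w : AdmMD V E n) : Prop :=
  TwistSeq tail head n w₀ w ∧
    ∀ (v : V) (l : List V), IsMinPath tail head n w (wv v) l → v ∉ l

/-- Edges joining `v` and `u`. -/
noncomputable def edgesBetween (tail head : E → V) (v u : V) : Finset E :=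
  Finset.univ.filter fun e => (tail e = v ∧ head e = u) ∨ (head e = v ∧ tail e = u)

/-- Edges adjacent to `v`. -/
noncomputable def edgesAdj (tail head : E → V) (v : V) : Finset E :=
  Finset.univ.filter fun e => tail e = v ∨ head e = v

/-- The change of a divisor effected by a single chip-firing move at `v`. -/
noncomputable def fireDelta (tail head : E → V) (v : V) : V → ℤ := fun u =>
  ((edgesBetween tail head v u).card : ℤ)
    - (if u = v then ((edgesAdj tail head v).card : ℤ) else 0)

/-- A chip-firing move (twist) at `v`. -/
noncomputable def chipFire (tail head : E → V) (D : V → ℤ) (v : V) : V → ℤ :=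
  fun u => D u + fireDelta tail head v u

/-- The inverse of a chip-firing move at `v`. -/
noncomputable def negChipFire (tail head : E → V) (D : V → ℤ) (v : V) : V → ℤ :=
  fun u => D u - fireDelta tail head v u

/-- A divisor (multidegree) on a graph is concentrated at `v`. -/
def ConcentratedDiv (tail head : E → V) (D : V → ℤ) (v : V) : Prop :=
  ∃ l : List V, l.Nodup ∧ (∀ x : V, x ∈ l) ∧ l.head? = some v ∧
    ∀ (i : ℕ) (h : i < l.length), 0 < i →
      (((l.take i).foldl (negChipFire tail head) D) (l.get ⟨i, h⟩)) < 0

/-- A divisor on a graph is `v₀`-reduced. -/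
def VReduced (tail head : E → V) (D : V → ℤ) (v₀ : V) : Prop :=
  (∀ u, u ≠ v₀ → 0 ≤ D u) ∧
    ∀ S : Finset V, S.Nonempty → v₀ ∉ S →
      ∃ v ∈ S, D v < ((Finset.univ.filter fun e : E =>
        (tail e = v ∧ head e ∉ S) ∨ (head e = v ∧ tail e ∉ S)).card : ℤ)

/-- The function `D_{w,v}` on edges of `Γ` determined by a path `l` from `w` to `w_v`. -/
noncomputable def DFun (tail head : E → V) (n : E → ℕ) (w : AdmMD V E n) (l : List V)
    (v : V) (et : E) : ℤ :=
  (((Finset.univ : Finset (Fin l.length)).filter fun j =>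
      l.get j = otherEnd tail head et v ∧
        ((l.take (j.val + 1)).foldl (twist tail head n) w).mu et = 0).card : ℤ)
  - (((Finset.univ : Finset (Fin l.length)).filter fun j =>
      l.get j = v ∧ ((l.take j.val).foldl (twist tail head n) w).mu et = 0).card : ℤ)

end FinGraph

/-- The tail map of the subdivided graph `Γ̃`: the edge `e` of `Γ` is subdivided into
`𝐧(e)` edges `(e, j)`, `j = 0, …, 𝐧(e) - 1`, numbered from the tail of `e`; the new
vertices over `e` are `(e, i)`, `i = 0, …, 𝐧(e) - 2`, with `(e, i)` being the
`(i+1)`-st new vertex from the tail of `e`. -/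
def tailT (tail head : E → V) (n : E → ℕ) :
    (Σ e : E, Fin (n e)) → V ⊕ Σ e : E, Fin (n e - 1) := fun p =>
  if h : p.2.val = 0 then Sum.inl (tail p.1)
  else Sum.inr ⟨p.1, ⟨p.2.val - 1, by have := p.2.isLt; omega⟩⟩

/-- The head map of the subdivided graph `Γ̃`. -/
def headT (tail head : E → V) (n : E → ℕ) :
    (Σ e : E, Fin (n e)) → V ⊕ Σ e : E, Fin (n e - 1) := fun p =>
  if h : p.2.val = n p.1 - 1 then Sum.inl (head p.1)
  else Sum.inr ⟨p.1, ⟨p.2.val, by have := p.2.isLt; omega⟩⟩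

/-- The multidegree on the subdivided graph `Γ̃` induced by an admissible multidegree:
it agrees with `w` on old vertices, is `1` on the `μ(e)`-th new vertex over `e`
when `μ(e) ≠ 0`, and is `0` on all other new vertices. -/
noncomputable def inducedMD (n : E → ℕ) (w : AdmMD V E n) :
    (V ⊕ Σ e : E, Fin (n e - 1)) → ℤ
  | Sum.inl v => w.wV v
  | Sum.inr ⟨e, i⟩ => if (w.mu e).val = i.val + 1 then 1 else 0

/-- The simple graph `Γ̄` associated to the multigraph `Γ`: same vertices, one edge
between each pair of adjacent vertices. -/
def barGraph (tail head : E → V) : SimpleGraph V where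
  Adj u v := u ≠ v ∧ ∃ e, (tail e = u ∧ head e = v) ∨ (tail e = v ∧ head e = u)
  symm := by
    constructor
    intro u v h
    exact ⟨h.1.symm, h.2.imp fun e he => he.symm⟩
  loopless := ⟨fun u h => h.1 rfl⟩

section BurningOrder

variable {W : Type*} [DecidableEq W]

theorem getElem_notMem_take_of_nodup {l : List W} (hl : l.Nodup) (i : ℕ) (hi : i < l.length) :
    l[i] ∉ l.take i := by
  rw [List.mem_take_iff_idxOf_lt (List.getElem_mem hi), hl.idxOf_getElem]
  exact lt_irrefl i

/-- `P x S` reads: `x` burns once the vertices of `S` have burnt. -/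
def IsBurningOrder (v₀ : W) (P : W → Finset W → Prop) (l : List W) : Prop :=
  l.Nodup ∧ (∀ x, x ∈ l) ∧ l.head? = some v₀ ∧
    ∀ (i : ℕ) (hi : i < l.length), 0 < i → P (l.get ⟨i, hi⟩) (l.take i).toFinset

variable [Fintype W]

def IsBurningRank (v₀ : W) (P : W → Finset W → Prop) (r : W → ℕ) : Prop :=
  (∀ x, r x = 0 ↔ x = v₀) ∧ ∀ x, x ≠ v₀ → P x {y | r y < r x}

variable {v₀ : W} {P : W → Finset W → Prop}

theorem IsBurningOrder.exists_injective_rank {l : List W} (hl : IsBurningOrder v₀ P l) :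
    ∃ r, Function.Injective r ∧ IsBurningRank v₀ P r := by
  obtain ⟨-, hall, hhead, hP⟩ := hl
  have h0 (x : W) : l.idxOf x = 0 ↔ x = v₀ := by
    rw [List.idxOf_eq_zero_iff_eq_nil_or_head_eq, hhead]
    simp [List.ne_nil_of_mem (hall x), eq_comm]
  refine ⟨l.idxOf, fun x y hxy => (List.idxOf_inj (hall x)).1 hxy, h0, fun x hx => ?_⟩
  have hPx := hP _ (List.idxOf_lt_length_of_mem (hall x))
    (Nat.pos_of_ne_zero (mt (h0 x).1 hx))
  rw [List.get_eq_getElem, List.getElem_idxOf] at hPx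
  convert hPx using 2
  ext y
  simp [List.mem_take_iff_idxOf_lt (hall y)]

theorem IsBurningRank.exists_burningOrder (hP : ∀ x, Monotone (P x)) {r : W → ℕ}
    (hr : IsBurningRank v₀ P r) : ∃ l, IsBurningOrder v₀ P l := by
  obtain ⟨hr0, hrP⟩ := hr
  set l := Finset.univ.toList.mergeSort fun a b => decide (r a ≤ r b)
  have hall : ∀ x, x ∈ l := by simp [l]
  have hnd : l.Nodup := (List.mergeSort_perm _ _).nodup_iff.2 (Finset.nodup_toList _)
  have hsorted : ∀ i j (hi : i < l.length) (hj : j < l.length), i < j → r l[i] ≤ r l[j] := by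
    intro i j hi hj hij
    have := List.pairwise_iff_getElem.1 <| List.pairwise_mergeSort
      (le := fun a b => decide (r a ≤ r b)) (by simp only [decide_eq_true_eq]; omega)
      (by simp only [Bool.or_eq_true, decide_eq_true_eq]; omega) Finset.univ.toList
    simpa using this i j hi hj hij
  have hlen : 0 < l.length := List.length_pos_of_mem (hall v₀)
  have hfirst : l[0] = v₀ := by
    obtain ⟨j, hj, hjv⟩ := List.getElem_of_mem (hall v₀)
    rcases Nat.eq_zero_or_pos j with rfl | hj0
    · exact hjv
    · have := hsorted 0 j hlen hj hj0
      rw [hjv, (hr0 v₀).2 rfl] at this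
      exact (hr0 _).1 (by omega)
  refine ⟨l, hnd, hall, ?_, fun i hi hi0 => ?_⟩
  · rw [List.head?_eq_getElem?, List.getElem?_eq_getElem hlen, hfirst]
  · have hx : l[i] ≠ v₀ := by
      rw [← hfirst]
      exact fun h => hi0.ne' ((hnd.getElem_inj_iff).1 h)
    refine hP _ (fun y hy => ?_) (hrP _ hx)
    obtain ⟨j, hj, rfl⟩ := List.getElem_of_mem (hall y)
    simp only [Finset.mem_filter, Finset.mem_univ, true_and] at hy
    have hji : j < i := by
      by_contra hij
      rcases (Nat.le_of_not_lt hij).lt_or_eq with h | rfl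
      · exact absurd (hsorted i j hi hj h) (Nat.not_le.2 hy)
      · exact lt_irrefl _ hy
    rw [List.mem_toFinset, List.mem_take_iff_getElem]
    exact ⟨j, lt_min hji hj, rfl⟩

end BurningOrder

section Firing

open Finset

variable {W F : Type*} [Fintype F] [DecidableEq W] (t h : F → W)

def edgesInto (x : W) (S : Finset W) : Finset F :=
  univ.filter fun e => (t e = x ∧ h e ∈ S) ∨ (h e = x ∧ t e ∈ S)

variable {t h}

theorem mem_edgesInto {x : W} {S : Finset W} {e : F} :
    e ∈ edgesInto t h x S ↔ (t e = x ∧ h e ∈ S) ∨ (h e = x ∧ t e ∈ S) := by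
  simp [edgesInto]

theorem edgesInto_mono (x : W) : Monotone (edgesInto t h x) := fun _ _ hS _ he => by
  rw [mem_edgesInto] at he ⊢
  exact he.imp (And.imp_right (@hS _)) (And.imp_right (@hS _))

theorem card_filter_edgesInto_insert (q : F → Prop) [DecidablePred q] {x a : W}
    {S : Finset W} (hxa : x ≠ a) (haS : a ∉ S) :
    #((edgesInto t h x (insert a S)).filter q)
      = #((edgesBetween t h a x).filter q) + #((edgesInto t h x S).filter q) := by
  classical
  rw [← card_union_of_disjoint]
  · congr 1
    ext e
    simp only [mem_filter, mem_union, mem_edgesInto, edgesBetween, mem_insert, mem_univ, true_and]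
    tauto
  · refine disjoint_left.2 fun e he he' => ?_
    simp only [mem_filter, mem_edgesInto, edgesBetween, mem_univ, true_and] at he he'
    rcases he.1 with ⟨rfl, rfl⟩ | ⟨rfl, rfl⟩ <;>
      rcases he'.1 with ⟨h1, h2⟩ | ⟨h1, h2⟩
    all_goals first | exact hxa h1.symm | exact hxa h1 | exact haS h2

theorem card_filter_edgesInto_of_loopless (hl : Loopless t h) (q : F → Prop) [DecidablePred q]
    (x : W) (S : Finset W) :
    #((edgesInto t h x S).filter q) = #(univ.filter fun e => t e = x ∧ h e ∈ S ∧ q e)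
      + #(univ.filter fun e => h e = x ∧ t e ∈ S ∧ q e) := by
  classical
  rw [← card_union_of_disjoint]
  · congr 1
    ext e
    simp only [mem_filter, mem_union, mem_edgesInto, mem_univ, true_and]
    tauto
  · exact disjoint_filter.2 fun e _ he he' => hl e (he.1.trans he'.1.symm)

theorem foldl_negChipFire_apply (D : W → ℤ) {l : List W} (hl : l.Nodup) {x : W} (hx : x ∉ l) :
    l.foldl (negChipFire t h) D x = D x - #(edgesInto t h x l.toFinset) := by
  induction l generalizing D with
  | nil => simp [edgesInto]
  | cons a l ih =>
    rw [List.nodup_cons] at hl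
    rw [List.mem_cons, not_or] at hx
    have := card_filter_edgesInto_insert (t := t) (h := h) (fun _ => True) hx.1
      (mt List.mem_toFinset.1 hl.1)
    simp only [filter_true] at this
    rw [List.foldl_cons, ih _ hl.2 hx.2, List.toFinset_cons, this]
    simp only [negChipFire, fireDelta, if_neg hx.1]
    push_cast
    ring

theorem concentratedDiv_iff (D : W → ℤ) (v₀ : W) :
    ConcentratedDiv t h D v₀ ↔
      ∃ l, IsBurningOrder v₀ (fun x S => D x < #(edgesInto t h x S)) l := by
  refine exists_congr fun l => and_congr_right fun hl => and_congr_right fun _ =>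
    and_congr_right fun _ => forall₂_congr fun i hi => imp_congr_right fun _ => ?_
  simp only [List.get_eq_getElem]
  rw [foldl_negChipFire_apply D (hl.sublist (List.take_sublist i l))
    (getElem_notMem_take_of_nodup hl i hi)]
  exact sub_neg

end Firing

section Twist

open Finset

variable {V E : Type*} [Fintype E] [DecidableEq V] {tail head : E → V} {n : E → ℕ}

theorem negTwist_mu_of_ne (w : AdmMD V E n) {a : V} {e : E} (ht : tail e ≠ a)
    (hh : head e ≠ a) : (negTwist tail head n w a).mu e = w.mu e := by
  simp [negTwist, sigma, ht, hh]

theorem negTwist_wV_of_ne (w : AdmMD V E n) {a x : V} (hxa : x ≠ a) :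
    (negTwist tail head n w a).wV x
      = w.wV x - #((edgesBetween tail head a x).filter fun e => w.mu e = 0) := by
  simp only [negTwist, if_neg hxa, add_zero]
  congr 3
  ext e
  simp only [mem_filter, mem_univ, true_and, edgesBetween, sigma, otherEnd]
  by_cases ht : tail e = a <;> by_cases hh : head e = a <;> simp [ht, hh] <;> grind

theorem foldl_negTwist_wV (w : AdmMD V E n) {l : List V} (hl : l.Nodup) {x : V}
    (hx : x ∉ l) :
    (l.foldl (negTwist tail head n) w).wV x
      = w.wV x - #((edgesInto tail head x l.toFinset).filter fun e => w.mu e = 0) := by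
  induction l generalizing w with
  | nil => simp [edgesInto]
  | cons a l ih =>
    rw [List.nodup_cons] at hl
    rw [List.mem_cons, not_or] at hx
    have hmu : ∀ e ∈ edgesInto tail head x l.toFinset,
        (negTwist tail head n w a).mu e = 0 ↔ w.mu e = 0 := by
      intro e he
      rw [mem_edgesInto, List.mem_toFinset, List.mem_toFinset] at he
      rw [negTwist_mu_of_ne] <;> rcases he with ⟨h1, h2⟩ | ⟨h1, h2⟩ <;> grind
    rw [List.foldl_cons, ih _ hl.2 hx.2, filter_congr hmu, negTwist_wV_of_ne w hx.1,
      List.toFinset_cons, card_filter_edgesInto_insert _ hx.1 (mt List.mem_toFinset.1 hl.1)]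
    push_cast
    ring

theorem concentrated_iff (w : AdmMD V E n) (v₀ : V) :
    Concentrated tail head n w v₀ ↔ ∃ l, IsBurningOrder v₀
      (fun x S => w.wV x < #((edgesInto tail head x S).filter fun e => w.mu e = 0)) l := by
  refine exists_congr fun l => and_congr_right fun hl => and_congr_right fun _ =>
    and_congr_right fun _ => forall₂_congr fun i hi => imp_congr_right fun _ => ?_
  simp only [List.get_eq_getElem]
  rw [foldl_negTwist_wV w (hl.sublist (List.take_sublist i l))
    (getElem_notMem_take_of_nodup hl i hi)]
  exact sub_neg

end Twist

section Chain

def lowerNeighbors (p : ℕ → ℕ) (t : ℕ) : ℕ :=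
  (if p (t - 1) < p t then 1 else 0) + (if p (t + 1) < p t then 1 else 0)

/-- `p t` is the rank of the `t`-th vertex of the chain over an edge of length `n`, whose chip
sits at position `m` (no chip if `m = 0`). -/
def IsBurningProfile (p : ℕ → ℕ) (m n : ℕ) : Prop :=
  ∀ t, 0 < t → t < n → (if m = t then 1 else 0) < lowerNeighbors p t

variable {p : ℕ → ℕ} {m n : ℕ}

theorem IsBurningProfile.of_start (hp : IsBurningProfile p m n) (hm : m < n) (h1 : p 1 < p 0) :
    m = 0 ∧ p n < p 0 := by
  have hdec : ∀ t < n, p (t + 1) < p t ∧ p (t + 1) < p 0 := by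
    intro t ht
    induction t with
    | zero => exact ⟨h1, h1⟩
    | succ t ih =>
      obtain ⟨h2, h3⟩ := ih (by omega)
      have := hp (t + 1) (by omega) ht
      simp only [lowerNeighbors, Nat.add_sub_cancel] at this
      split_ifs at this <;> omega
  refine ⟨by_contra fun hm0 => ?_, (hdec (n - 1) (by omega)).2.trans_eq' (by congr; omega)⟩
  have hchip := hp m (Nat.pos_of_ne_zero hm0) hm
  have hbefore := (hdec (m - 1) (by omega)).1
  rw [Nat.sub_add_cancel (Nat.pos_of_ne_zero hm0)] at hbefore
  simp only [lowerNeighbors] at hchip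
  split_ifs at hchip <;> omega

theorem IsBurningProfile.reflect (hp : IsBurningProfile p m n) :
    IsBurningProfile (fun t => p (n - t)) (if m = 0 then 0 else n - m) n := by
  intro t ht0 htn
  have := hp (n - t) (by omega) (by omega)
  simp only [lowerNeighbors] at this ⊢
  have hm' : (if m = 0 then 0 else n - m) = t ↔ m = n - t := by split_ifs <;> omega
  simp only [hm', show n - (t - 1) = n - t + 1 by omega, show n - (t + 1) = n - t - 1 by omega]
  omega

theorem IsBurningProfile.of_end (hp : IsBurningProfile p m n) (hm : m < n)
    (h : p (n - 1) < p n) : m = 0 ∧ p 0 < p n := by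
  have := hp.reflect.of_start (by split_ifs <;> omega) (by simpa using h)
  simp only [Nat.sub_self, Nat.sub_zero] at this
  exact ⟨by split_ifs at this <;> omega, this.2⟩

/-- Ranks along a chain whose endpoints have ranks `A` and `B`: positions before the split point
rise from `A`, the others rise from `B`. The split point puts the chip `m` on the side of the
higher endpoint with its other neighbour on the lower side, so that both neighbours of the chip
are lower; a chain without chip is burnt entirely from its lower endpoint. -/
def chainProfile (A B n m t : ℕ) : ℕ :=
  if t < (if A < B then (if m = 0 then n else m) else m + 1) then A + t else B + (n - t)

theorem chainProfile_zero (A B : ℕ) (hm : m < n) : chainProfile A B n m 0 = A := by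
  simp only [chainProfile]
  split_ifs <;> omega

theorem chainProfile_self (A B : ℕ) (hm : m < n) : chainProfile A B n m n = B := by
  simp only [chainProfile]
  split_ifs <;> omega

theorem chainProfile_pos {A B t : ℕ} (ht0 : 0 < t) (htn : t < n) :
    0 < chainProfile A B n m t := by
  simp only [chainProfile]
  split_ifs <;> omega

theorem chainProfile_one_lt {A B : ℕ} (hBA : B + n < A) : chainProfile A B n 0 1 < A := by
  simp only [chainProfile]
  split_ifs <;> omega

theorem chainProfile_pred_lt {A B : ℕ} (hn : 0 < n) (hAB : A + n < B) :
    chainProfile A B n 0 (n - 1) < B := by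
  simp only [chainProfile]
  split_ifs <;> omega

theorem isBurningProfile_chainProfile {A B : ℕ} (hAB : A + n < B ∨ B + n < A) (hm : m < n) :
    IsBurningProfile (chainProfile A B n m) m n := by
  intro t ht0 htn
  simp only [lowerNeighbors, chainProfile]
  split_ifs <;> omega

end Chain

section Subdivision

open Finset

variable {V E : Type*} (tail head : E → V) (n : E → ℕ)

/-- The `t`-th vertex of the chain of `Γ̃` over `e`, counted from `tail e`
(so `t = n e` is `head e`). -/
def chainVertex (e : E) (t : ℕ) : V ⊕ Σ e : E, Fin (n e - 1) :=
  if h0 : t = 0 then Sum.inl (tail e)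
  else if h : t < n e then Sum.inr ⟨e, ⟨t - 1, by omega⟩⟩
  else Sum.inl (head e)

variable {tail head n}

theorem chainVertex_zero (e : E) : chainVertex tail head n e 0 = Sum.inl (tail e) := by
  simp [chainVertex]

theorem chainVertex_self {e : E} (he : 0 < n e) :
    chainVertex tail head n e (n e) = Sum.inl (head e) := by
  simp [chainVertex, he.ne']

theorem chainVertex_of_pos_of_lt {e : E} {t : ℕ} (ht0 : 0 < t) (htn : t < n e) :
    chainVertex tail head n e t = Sum.inr ⟨e, ⟨t - 1, by omega⟩⟩ := by
  simp [chainVertex, ht0.ne', htn]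

theorem inr_eq_chainVertex (e : E) (i : Fin (n e - 1)) :
    Sum.inr ⟨e, i⟩ = chainVertex tail head n e (i + 1) := by
  rw [chainVertex_of_pos_of_lt (Nat.succ_pos _) (by omega)]
  rfl

theorem tailT_eq_chainVertex (e : E) (j : Fin (n e)) :
    tailT tail head n ⟨e, j⟩ = chainVertex tail head n e j := by
  unfold tailT chainVertex
  split_ifs <;> simp_all

theorem headT_eq_chainVertex (e : E) (j : Fin (n e)) :
    headT tail head n ⟨e, j⟩ = chainVertex tail head n e (j + 1) := by
  have := j.isLt
  unfold headT chainVertex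
  split_ifs <;> simp_all <;> omega

theorem chainVertex_eq_inl_iff {e : E} (he : 0 < n e) {t : ℕ} {u : V} :
    chainVertex tail head n e t = Sum.inl u ↔
      (t = 0 ∧ tail e = u) ∨ (n e ≤ t ∧ head e = u) := by
  unfold chainVertex
  split_ifs <;> simp_all
  omega

theorem chainVertex_eq_chainVertex_iff {e e' : E} {s t : ℕ} (ht0 : 0 < t) (htn : t < n e) :
    chainVertex tail head n e' s = chainVertex tail head n e t ↔ e' = e ∧ s = t := by
  refine ⟨fun h => ?_, fun ⟨rfl, rfl⟩ => rfl⟩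
  rw [chainVertex_of_pos_of_lt ht0 htn] at h
  unfold chainVertex at h
  split_ifs at h with hs0 hsn
  all_goals simp only [Sum.inr.injEq, Sigma.mk.inj_iff] at h
  obtain ⟨rfl, h⟩ := h
  simp only [heq_eq_eq, Fin.mk.injEq] at h
  exact ⟨rfl, by omega⟩

theorem val_mu_lt (w : AdmMD V E n) {e : E} (he : 0 < n e) : (w.mu e).val < n e :=
  haveI := NeZero.of_pos he
  ZMod.val_lt _

theorem inducedMD_chainVertex (w : AdmMD V E n) {e : E} {t : ℕ} (ht0 : 0 < t)
    (htn : t < n e) :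
    inducedMD n w (chainVertex tail head n e t) = if (w.mu e).val = t then 1 else 0 := by
  rw [chainVertex_of_pos_of_lt ht0 htn]
  simp only [inducedMD, Nat.sub_add_cancel ht0]

theorem loopless_subdivision (hl : Loopless tail head) (hn : ∀ e, 0 < n e) :
    Loopless (tailT tail head n) (headT tail head n) := by
  rintro ⟨e, j⟩ h
  rw [tailT_eq_chainVertex, headT_eq_chainVertex] at h
  rcases Nat.lt_or_ge (j + 1) (n e) with hj | hj
  · exact absurd ((chainVertex_eq_chainVertex_iff (Nat.succ_pos _) hj).1 h).2 (by omega)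
  · rw [show (j : ℕ) + 1 = n e by omega, chainVertex_self (hn e),
      chainVertex_eq_inl_iff (hn e)] at h
    rcases h with ⟨-, h⟩ | ⟨h, -⟩
    · exact hl e h
    · omega

end Subdivision

section SubdivisionCard

open Finset

variable {V E : Type*} [Fintype E] [DecidableEq V] [DecidableEq E] {tail head : E → V}
  {n : E → ℕ}

theorem card_filter_eq_and_or_eq_and {α : Type*} [Fintype α] [DecidableEq α] {a b : α}
    (hab : a ≠ b) (c d : Prop) [Decidable c] [Decidable d] :
    #(univ.filter fun x => (x = a ∧ c) ∨ (x = b ∧ d))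
      = (if c then 1 else 0) + (if d then 1 else 0) := by
  by_cases hc : c <;> by_cases hd : d <;> simp [hc, hd, filter_or, filter_eq', card_pair hab]

theorem card_edgesInto_chainVertex {e : E} {t : ℕ} (ht0 : 0 < t) (htn : t < n e)
    (S : Finset (V ⊕ Σ e : E, Fin (n e - 1))) :
    #(edgesInto (tailT tail head n) (headT tail head n) (chainVertex tail head n e t) S)
      = (if chainVertex tail head n e (t - 1) ∈ S then 1 else 0)
        + (if chainVertex tail head n e (t + 1) ∈ S then 1 else 0) := by
  rw [add_comm, ← card_filter_eq_and_or_eq_and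
    (a := (⟨e, ⟨t, htn⟩⟩ : Σ e : E, Fin (n e))) (b := ⟨e, ⟨t - 1, by omega⟩⟩) (by simp; omega)]
  congr 1
  ext ⟨e', j⟩
  simp only [mem_edgesInto, tailT_eq_chainVertex, headT_eq_chainVertex,
    chainVertex_eq_chainVertex_iff ht0 htn, mem_filter, mem_univ, true_and]
  constructor
  · rintro (⟨⟨rfl, hj⟩, hS⟩ | ⟨⟨rfl, hj⟩, hS⟩)
    · exact Or.inl ⟨Sigma.ext rfl (heq_of_eq (Fin.ext hj)), hj ▸ hS⟩
    · refine Or.inr ⟨Sigma.ext rfl (heq_of_eq (Fin.ext (by simp; omega))), ?_⟩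
      rwa [show t - 1 = j by omega]
  · rintro (⟨h, hS⟩ | ⟨h, hS⟩) <;> cases h
    · exact Or.inl ⟨⟨rfl, rfl⟩, hS⟩
    · exact Or.inr ⟨⟨rfl, by simp; omega⟩, hS⟩

theorem card_filter_tailT_eq_inl (hn : ∀ e, 0 < n e) (u : V)
    (S : Finset (V ⊕ Σ e : E, Fin (n e - 1))) :
    #(univ.filter fun ed => tailT tail head n ed = Sum.inl u ∧ headT tail head n ed ∈ S)
      = #(univ.filter fun e => tail e = u ∧ chainVertex tail head n e 1 ∈ S) := by
  refine card_nbij' Sigma.fst (fun e => ⟨e, ⟨0, hn e⟩⟩) ?_ ?_ ?_ (fun _ _ => rfl)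
  · rintro ⟨e, j⟩
    simp only [mem_coe, mem_filter, mem_univ, true_and, tailT_eq_chainVertex,
      headT_eq_chainVertex, chainVertex_eq_inl_iff (hn e)]
    rintro ⟨⟨hj, rfl⟩ | ⟨hj, -⟩, hS⟩
    · simpa [hj] using hS
    · omega
  · intro e
    simp only [mem_coe, mem_filter, mem_univ, true_and, tailT_eq_chainVertex,
      headT_eq_chainVertex, chainVertex_zero]
    rintro ⟨rfl, hS⟩
    exact ⟨rfl, hS⟩
  · rintro ⟨e, j⟩
    simp only [mem_coe, mem_filter, mem_univ, true_and, tailT_eq_chainVertex,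
      chainVertex_eq_inl_iff (hn e)]
    rintro ⟨⟨hj, -⟩ | ⟨hj, -⟩, -⟩
    · exact Sigma.ext rfl (heq_of_eq (Fin.ext hj.symm))
    · omega

theorem card_filter_headT_eq_inl (hn : ∀ e, 0 < n e) (u : V)
    (S : Finset (V ⊕ Σ e : E, Fin (n e - 1))) :
    #(univ.filter fun ed => headT tail head n ed = Sum.inl u ∧ tailT tail head n ed ∈ S)
      = #(univ.filter fun e => head e = u ∧ chainVertex tail head n e (n e - 1) ∈ S) := by
  refine card_nbij' Sigma.fst (fun e => ⟨e, ⟨n e - 1, by have := hn e; omega⟩⟩) ?_ ?_ ?_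
    (fun _ _ => rfl)
  · rintro ⟨e, j⟩
    simp only [mem_coe, mem_filter, mem_univ, true_and, tailT_eq_chainVertex,
      headT_eq_chainVertex, chainVertex_eq_inl_iff (hn e)]
    rintro ⟨⟨hj, -⟩ | ⟨hj, rfl⟩, hS⟩
    · omega
    · simpa [show (j : ℕ) = n e - 1 by omega] using hS
  · intro e
    simp only [mem_coe, mem_filter, mem_univ, true_and, tailT_eq_chainVertex,
      headT_eq_chainVertex, Nat.sub_add_cancel (hn e), chainVertex_self (hn e)]
    rintro ⟨rfl, hS⟩
    exact ⟨rfl, hS⟩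
  · rintro ⟨e, j⟩
    simp only [mem_coe, mem_filter, mem_univ, true_and, headT_eq_chainVertex,
      chainVertex_eq_inl_iff (hn e)]
    rintro ⟨⟨hj, -⟩ | ⟨hj, -⟩, -⟩
    · omega
    · exact Sigma.ext rfl (heq_of_eq (Fin.ext (by simp; omega)))

theorem card_edgesInto_inl (hl : Loopless tail head) (hn : ∀ e, 0 < n e) (u : V)
    (S : Finset (V ⊕ Σ e : E, Fin (n e - 1))) :
    #(edgesInto (tailT tail head n) (headT tail head n) (Sum.inl u) S)
      = #(univ.filter fun e => tail e = u ∧ chainVertex tail head n e 1 ∈ S)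
        + #(univ.filter fun e => head e = u ∧ chainVertex tail head n e (n e - 1) ∈ S) := by
  have := card_filter_edgesInto_of_loopless (loopless_subdivision hl hn) (fun _ => True)
    (Sum.inl u) S
  simp only [filter_true, and_true] at this
  rw [this, card_filter_tailT_eq_inl hn, card_filter_headT_eq_inl hn]

end SubdivisionCard

section SubdivisionRank

open Finset

variable {V E : Type*} [Fintype V] [Fintype E] [DecidableEq V] [DecidableEq E]
  {tail head : E → V} {n : E → ℕ}

theorem inducedMD_lt_card_edgesInto_chainVertex_iff (w : AdmMD V E n)
    (P : V ⊕ (Σ e : E, Fin (n e - 1)) → ℕ) {e : E} {t : ℕ} (ht0 : 0 < t) (htn : t < n e) :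
    inducedMD n w (chainVertex tail head n e t)
        < #(edgesInto (tailT tail head n) (headT tail head n) (chainVertex tail head n e t)
          (univ.filter fun y => P y < P (chainVertex tail head n e t)))
      ↔ (if (w.mu e).val = t then 1 else 0)
        < lowerNeighbors (fun s => P (chainVertex tail head n e s)) t := by
  rw [inducedMD_chainVertex w ht0 htn, card_edgesInto_chainVertex ht0 htn]
  simp only [mem_filter, mem_univ, true_and, lowerNeighbors]
  split_ifs <;> simp

theorem card_edgesInto_inl_le_card_filter_edgesInto (hl : Loopless tail head)
    (hn : ∀ e, 0 < n e) {w : AdmMD V E n} {P : V ⊕ (Σ e : E, Fin (n e - 1)) → ℕ}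
    (hprofile : ∀ e,
      IsBurningProfile (fun t => P (chainVertex tail head n e t)) (w.mu e).val (n e))
    (u : V) :
    #(edgesInto (tailT tail head n) (headT tail head n) (Sum.inl u)
        (univ.filter fun y => P y < P (Sum.inl u)))
      ≤ #((edgesInto tail head u (univ.filter fun y => P (Sum.inl y) < P (Sum.inl u))).filter
        fun e => w.mu e = 0) := by
  rw [card_filter_edgesInto_of_loopless hl, card_edgesInto_inl hl hn]
  refine add_le_add (card_le_card fun e => ?_) (card_le_card fun e => ?_) <;>
    simp only [mem_filter, mem_univ, true_and]
  · rintro ⟨rfl, he⟩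
    rw [← chainVertex_zero (head := head) (n := n)] at he
    obtain ⟨hmu, hlt⟩ := (hprofile e).of_start (val_mu_lt w (hn e)) he
    rw [chainVertex_self (hn e), chainVertex_zero] at hlt
    exact ⟨rfl, hlt, (ZMod.val_eq_zero _).1 hmu⟩
  · rintro ⟨rfl, he⟩
    rw [← chainVertex_self (tail := tail) (hn e)] at he
    obtain ⟨hmu, hlt⟩ := (hprofile e).of_end (val_mu_lt w (hn e)) he
    rw [chainVertex_zero, chainVertex_self (hn e)] at hlt
    exact ⟨rfl, hlt, (ZMod.val_eq_zero _).1 hmu⟩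

theorem IsBurningRank.restrict (hl : Loopless tail head) (hn : ∀ e, 0 < n e) {w : AdmMD V E n}
    {v₀ : V} {P : V ⊕ (Σ e : E, Fin (n e - 1)) → ℕ}
    (hP : IsBurningRank (Sum.inl v₀) (fun x S => inducedMD n w x
      < #(edgesInto (tailT tail head n) (headT tail head n) x S)) P) :
    IsBurningRank v₀ (fun x S => w.wV x
      < #((edgesInto tail head x S).filter fun e => w.mu e = 0)) (fun u => P (Sum.inl u)) := by
  have hprofile (e : E) :
      IsBurningProfile (fun t => P (chainVertex tail head n e t)) (w.mu e).val (n e) :=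
    fun t ht0 htn => (inducedMD_lt_card_edgesInto_chainVertex_iff w P ht0 htn).1
      (hP.2 _ (by rw [chainVertex_of_pos_of_lt ht0 htn]; exact Sum.inr_ne_inl))
  exact ⟨fun x => (hP.1 _).trans Sum.inl_injective.eq_iff, fun u hu =>
    (hP.2 (Sum.inl u) (by simpa using hu)).trans_le
      (mod_cast card_edgesInto_inl_le_card_filter_edgesInto hl hn hprofile u)⟩

end SubdivisionRank

section Extension

open Finset

variable {V E : Type*} {tail head : E → V} {n : E → ℕ}

variable (tail head n) in
def subdivRank (w : AdmMD V E n) (M : ℕ) (r : V → ℕ) : V ⊕ (Σ e : E, Fin (n e - 1)) → ℕ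
  | Sum.inl u => M * r u
  | Sum.inr ⟨e, i⟩ => chainProfile (M * r (tail e)) (M * r (head e)) (n e) (w.mu e).val (i + 1)

theorem subdivRank_chainVertex (w : AdmMD V E n) (M : ℕ) (r : V → ℕ) {e : E} (he : 0 < n e)
    {t : ℕ} (ht : t ≤ n e) :
    subdivRank tail head n w M r (chainVertex tail head n e t)
      = chainProfile (M * r (tail e)) (M * r (head e)) (n e) (w.mu e).val t := by
  have hm := val_mu_lt w he
  rcases Nat.eq_zero_or_pos t with rfl | ht0
  · rw [chainVertex_zero, chainProfile_zero _ _ hm, subdivRank]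
  rcases ht.lt_or_eq with htn | rfl
  · rw [chainVertex_of_pos_of_lt ht0 htn, subdivRank, Nat.sub_add_cancel ht0]
  · rw [chainVertex_self he, chainProfile_self _ _ hm, subdivRank]

theorem mul_add_lt_mul_of_lt {M a b c : ℕ} (hab : a < b) (hc : c < M) : M * a + c < M * b :=
  calc M * a + c < M * (a + 1) := by rw [mul_add_one]; omega
    _ ≤ M * b := Nat.mul_le_mul_left M hab

variable [Fintype V] [Fintype E] [DecidableEq V] [DecidableEq E]

theorem card_filter_edgesInto_le_card_edgesInto_subdivRank (hl : Loopless tail head)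
    (hn : ∀ e, 0 < n e) {w : AdmMD V E n} {M : ℕ} (hM : ∀ e, n e < M) {r : V → ℕ} (u : V) :
    #((edgesInto tail head u (univ.filter fun y => r y < r u)).filter fun e => w.mu e = 0)
      ≤ #(edgesInto (tailT tail head n) (headT tail head n) (Sum.inl u)
        (univ.filter fun y => subdivRank tail head n w M r y < M * r u)) := by
  rw [card_filter_edgesInto_of_loopless hl, card_edgesInto_inl hl hn]
  refine add_le_add (card_le_card fun e => ?_) (card_le_card fun e => ?_) <;>
    simp only [mem_filter, mem_univ, true_and]
  · rintro ⟨rfl, hlt, hmu⟩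
    refine ⟨rfl, ?_⟩
    rw [subdivRank_chainVertex w M r (hn e) (show 1 ≤ n e from hn e), hmu, ZMod.val_zero]
    exact chainProfile_one_lt (mul_add_lt_mul_of_lt hlt (hM e))
  · rintro ⟨rfl, hlt, hmu⟩
    refine ⟨rfl, ?_⟩
    rw [subdivRank_chainVertex w M r (hn e) (Nat.sub_le _ _), hmu, ZMod.val_zero]
    exact chainProfile_pred_lt (hn e) (mul_add_lt_mul_of_lt hlt (hM e))

theorem isBurningRank_subdivRank (hl : Loopless tail head) (hn : ∀ e, 0 < n e)
    {w : AdmMD V E n} {v₀ : V} {M : ℕ} (hM0 : 0 < M) (hM : ∀ e, n e < M) {r : V → ℕ}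
    (hinj : Function.Injective r)
    (hr : IsBurningRank v₀ (fun x S => w.wV x
      < #((edgesInto tail head x S).filter fun e => w.mu e = 0)) r) :
    IsBurningRank (Sum.inl v₀) (fun x S => inducedMD n w x
      < #(edgesInto (tailT tail head n) (headT tail head n) x S))
      (subdivRank tail head n w M r) := by
  refine ⟨?_, ?_⟩
  · rintro (u | ⟨e, i⟩)
    · simp [subdivRank, hM0.ne', hr.1]
    · refine iff_of_false ?_ Sum.inr_ne_inl
      rw [inr_eq_chainVertex, subdivRank_chainVertex w M r (hn e) (by omega)]
      exact (chainProfile_pos (Nat.succ_pos _) (by omega)).ne'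
  rintro (u | ⟨e, i⟩) hx
  · exact (hr.2 u (by simpa using hx)).trans_le
      (mod_cast card_filter_edgesInto_le_card_edgesInto_subdivRank hl hn hM u)
  · have ht0 : 0 < (i : ℕ) + 1 := Nat.succ_pos _
    have htn : (i : ℕ) + 1 < n e := by omega
    have hsep : M * r (tail e) + n e < M * r (head e) ∨ M * r (head e) + n e < M * r (tail e) :=
      (lt_or_gt_of_ne (hinj.ne (hl e))).imp (mul_add_lt_mul_of_lt · (hM e))
        (mul_add_lt_mul_of_lt · (hM e))
    rw [inr_eq_chainVertex, inducedMD_lt_card_edgesInto_chainVertex_iff w _ ht0 htn]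
    simp only [lowerNeighbors,
      subdivRank_chainVertex w M r (hn e) (by omega : (i : ℕ) + 1 - 1 ≤ n e),
      subdivRank_chainVertex w M r (hn e) htn.le, subdivRank_chainVertex w M r (hn e) htn]
    exact isBurningProfile_chainProfile hsep (val_mu_lt w (hn e)) _ ht0 htn

end Extension

theorem statement_2_general {V E : Type*} [Fintype V] [Fintype E] [DecidableEq V] [DecidableEq E]
    (tail head : E → V) (n : E → ℕ)
    (hloop : Loopless tail head)
    (hn : ∀ e, 0 < n e)
    (w : AdmMD V E n) (v₀ : V) :
    Concentrated tail head n w v₀ ↔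
      ConcentratedDiv (tailT tail head n) (headT tail head n) (inducedMD n w)
        (Sum.inl v₀) := by
  rw [concentrated_iff, concentratedDiv_iff]
  constructor
  · rintro ⟨l, hl⟩
    obtain ⟨r, hinj, hr⟩ := hl.exists_injective_rank
    have hM (e : E) : n e < ∑ e, n e + 1 :=
      Nat.lt_succ_of_le (Finset.single_le_sum (by simp) (Finset.mem_univ e))
    exact (isBurningRank_subdivRank hloop hn (Nat.succ_pos _) hM hinj hr).exists_burningOrder
      fun x _ _ hS h => h.trans_le (mod_cast Finset.card_le_card (edgesInto_mono x hS))
  · rintro ⟨l, hl⟩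
    obtain ⟨P, -, hP⟩ := hl.exists_injective_rank
    exact (hP.restrict hloop hn).exists_burningOrder
      fun x _ _ hS h => h.trans_le (mod_cast Finset.card_le_card
        (Finset.filter_subset_filter _ (edgesInto_mono x hS)))

/-- an admissible multidegree is concentrated at `v₀` iff its induced
multidegree on the subdivided graph `Γ̃` is concentrated at `v₀`. -/
theorem statement_2 {V E : Type*} [Fintype V] [Fintype E] [DecidableEq V] [DecidableEq E]
    (tail head : E → V) (n : E → ℕ)
    (hloop : Loopless tail head) (hconn : MGConnected tail head)
    (hn : ∀ e, 0 < n e)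
    (w : AdmMD V E n) (v₀ : V) :
    Concentrated tail head n w v₀ ↔
      ConcentratedDiv (tailT tail head n) (headT tail head n) (inducedMD n w)
        (Sum.inl v₀) :=
  statement_2_general tail head n hloop hn w v₀

end LLS
end

section
/- If a multidegree D on the subdivided graph Γ̃ is v-reduced for some vertex v ∈ V(Γ), then D is admissible; that is, D is the induced multidegree of an admissible multidegree on (Γ, 𝐧): for every edge e of Γ, the values of D on the 𝐧(e)−1 new vertices over e are all 0 or 1, with the value 1 occurring at most once. -/
open scoped Classical

namespace LLS

variable {V E : Type*}

/-! Apply reducedness to the set `S` of new vertices `a, …, b` over one edge `e`. Each of them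
has exactly two incident edges in `Γ̃`, and such an edge leaves `S` only at an end of the
segment, so some `m ∈ S` has `D m < [m = a] + [m = b]`. Taking `a = b` gives `D ≤ 1` on new
vertices; taking for `a < b` two new vertices carrying `1` contradicts `D ≥ 0` in between. -/

section Subdivision

variable (tail head : E → V) (n : E → ℕ)

theorem tailT_eq_inr_iff (f : Σ e : E, Fin (n e)) (e : E) (m : Fin (n e - 1)) :
    tailT tail head n f = Sum.inr ⟨e, m⟩ ↔ f = ⟨e, ⟨m + 1, by omega⟩⟩ := by
  obtain ⟨e', k⟩ := f
  unfold tailT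
  dsimp only
  split_ifs with hk
  · simp only [false_iff]
    rintro ⟨⟩
    simp at hk
  · constructor
    · rintro ⟨⟩
      exact congrArg (Sigma.mk _) (Fin.ext (by dsimp only; omega))
    · rintro ⟨⟩
      rfl

theorem headT_eq_inr_iff (f : Σ e : E, Fin (n e)) (e : E) (m : Fin (n e - 1)) :
    headT tail head n f = Sum.inr ⟨e, m⟩ ↔ f = ⟨e, ⟨m, by omega⟩⟩ := by
  obtain ⟨e', k⟩ := f
  unfold headT
  dsimp only
  split_ifs with hk
  · simp only [false_iff]
    rintro ⟨⟩
    simp at hk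
    omega
  · constructor
    · rintro ⟨⟩
      rfl
    · rintro ⟨⟩
      rfl

end Subdivision

section Segment

variable (n : E → ℕ)

def segment (e : E) (a b : Fin (n e - 1)) : Finset (V ⊕ Σ e : E, Fin (n e - 1)) :=
  (Finset.Icc a b).map ⟨fun k => Sum.inr ⟨e, k⟩, Sum.inr_injective.comp sigma_mk_injective⟩

variable {n}

theorem inr_mem_segment {e : E} {a b k : Fin (n e - 1)} :
    (Sum.inr ⟨e, k⟩ : V ⊕ Σ e : E, Fin (n e - 1)) ∈ segment n e a b ↔ a ≤ k ∧ k ≤ b := by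
  simp [segment]

theorem inl_notMem_segment {e : E} {a b : Fin (n e - 1)} (v : V) :
    Sum.inl v ∉ segment n e a b := by
  simp [segment]

variable [Fintype E] [DecidableEq V] [DecidableEq E] (tail head : E → V)

theorem card_edges_leaving_segment_le {e : E} {a b m : Fin (n e - 1)} (ham : a ≤ m)
    (hmb : m ≤ b) :
    (Finset.univ.filter fun f : Σ e : E, Fin (n e) =>
      (tailT tail head n f = Sum.inr ⟨e, m⟩ ∧ headT tail head n f ∉ segment n e a b) ∨
      (headT tail head n f = Sum.inr ⟨e, m⟩ ∧ tailT tail head n f ∉ segment n e a b)).card ≤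
      (if m = b then 1 else 0) + (if m = a then 1 else 0) := by
  rw [Finset.filter_or]
  refine (Finset.card_union_le _ _).trans (add_le_add ?_ ?_) <;> split_ifs with h
  · refine Finset.card_le_one.mpr ?_
    simp only [Finset.mem_filter, Finset.mem_univ, true_and, tailT_eq_inr_iff]
    rintro _ ⟨rfl, -⟩ _ ⟨rfl, -⟩
    rfl
  · refine Nat.le_zero.mpr (Finset.card_eq_zero.mpr (Finset.filter_eq_empty_iff.mpr ?_))
    rintro f - ⟨hf, hout⟩
    rw [tailT_eq_inr_iff] at hf
    subst hf
    have hmb' : m < b := lt_of_le_of_ne hmb h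
    rw [(headT_eq_inr_iff tail head n _ e ⟨(m : ℕ) + 1, by omega⟩).mpr rfl,
      inr_mem_segment] at hout
    exact hout ⟨by simp only [Fin.le_def]; omega, by simp only [Fin.le_def]; omega⟩
  · refine Finset.card_le_one.mpr ?_
    simp only [Finset.mem_filter, Finset.mem_univ, true_and, headT_eq_inr_iff]
    rintro _ ⟨rfl, -⟩ _ ⟨rfl, -⟩
    rfl
  · refine Nat.le_zero.mpr (Finset.card_eq_zero.mpr (Finset.filter_eq_empty_iff.mpr ?_))
    rintro f - ⟨hf, hout⟩
    rw [headT_eq_inr_iff] at hf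
    subst hf
    have ham' : a < m := lt_of_le_of_ne ham (Ne.symm h)
    rw [(tailT_eq_inr_iff tail head n _ e ⟨(m : ℕ) - 1, by omega⟩).mpr
      (congrArg (Sigma.mk e) (Fin.ext (by dsimp only; omega))), inr_mem_segment] at hout
    exact hout ⟨by simp only [Fin.le_def]; omega, by simp only [Fin.le_def]; omega⟩

end Segment

theorem VReduced.exists_lt_on_segment [Fintype V] [Fintype E] [DecidableEq V] [DecidableEq E]
    {tail head : E → V} {n : E → ℕ} {D : (V ⊕ Σ e : E, Fin (n e - 1)) → ℤ} {v : V}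
    (hred : VReduced (tailT tail head n) (headT tail head n) D (Sum.inl v)) (e : E)
    {a b : Fin (n e - 1)} (hab : a ≤ b) :
    ∃ m ∈ Finset.Icc a b,
      D (Sum.inr ⟨e, m⟩) < (if m = b then 1 else 0) + (if m = a then 1 else 0) := by
  obtain ⟨u, hu, hlt⟩ := hred.2 (segment n e a b) ⟨_, inr_mem_segment.mpr ⟨le_rfl, hab⟩⟩
    (inl_notMem_segment v)
  obtain ⟨m, hm, rfl⟩ := Finset.mem_map.mp hu
  obtain ⟨ham, hmb⟩ := Finset.mem_Icc.mp hm
  refine ⟨m, hm, hlt.trans_le ?_⟩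
  exact_mod_cast card_edges_leaving_segment_le tail head ham hmb

theorem eq_zero_or_eq_one_and_unique_of_lt_on_segment {N : ℕ} {d : Fin N → ℤ}
    (hnonneg : ∀ i, 0 ≤ d i)
    (hseg : ∀ a b : Fin N, a ≤ b → ∃ m ∈ Finset.Icc a b,
      d m < (if m = b then 1 else 0) + (if m = a then 1 else 0)) :
    (∀ i, d i = 0 ∨ d i = 1) ∧ ∀ i j, d i = 1 → d j = 1 → i = j := by
  have h01 (i : Fin N) : d i = 0 ∨ d i = 1 := by
    obtain ⟨m, hm, hlt⟩ := hseg i i le_rfl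
    rw [Finset.Icc_self, Finset.mem_singleton] at hm
    subst hm
    have := hnonneg m
    simp only [if_true] at hlt
    omega
  suffices hlt : ∀ i j, i < j → d i = 1 → d j = 1 → False by
    refine ⟨h01, fun i j hi hj => ?_⟩
    by_contra hne
    rcases lt_or_gt_of_ne hne with h | h
    exacts [hlt i j h hi hj, hlt j i h hj hi]
  intro i j hij hi hj
  obtain ⟨m, hm, hlt⟩ := hseg i j hij.le
  obtain ⟨him, hmj⟩ := Finset.mem_Icc.mp hm
  have := hnonneg m
  split_ifs at hlt <;> subst_vars <;> omega

theorem exists_zmod_val_indicator {N : ℕ} {d : Fin (N - 1) → ℤ} (h01 : ∀ i, d i = 0 ∨ d i = 1)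
    (hunique : ∀ i j, d i = 1 → d j = 1 → i = j) :
    ∃ μ : ZMod N, ∀ i, d i = if μ.val = i + 1 then 1 else 0 := by
  by_cases h : ∃ j, d j = 1
  · obtain ⟨j, hj⟩ := h
    refine ⟨((j : ℕ) + 1 : ℕ), fun i => ?_⟩
    rw [ZMod.val_natCast_of_lt (by omega)]
    by_cases hij : i = j
    · simp [hij, hj]
    · rw [if_neg fun h => hij (Fin.ext (by omega))]
      exact (h01 i).resolve_right fun hi => hij (hunique i j hi hj)
  · simp only [not_exists] at h
    refine ⟨0, fun i => ?_⟩
    rw [ZMod.val_zero, if_neg (by omega)]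
    exact (h01 i).resolve_right (h i)

theorem statement_7_general {V E : Type*} [Fintype V] [Fintype E] [DecidableEq V] [DecidableEq E]
    (tail head : E → V) (n : E → ℕ)
    (D : (V ⊕ Σ e : E, Fin (n e - 1)) → ℤ) (v : V)
    (hred : VReduced (tailT tail head n) (headT tail head n) D (Sum.inl v)) :
    (∀ (e : E) (i : Fin (n e - 1)),
        D (Sum.inr ⟨e, i⟩) = 0 ∨ D (Sum.inr ⟨e, i⟩) = 1) ∧
    (∀ (e : E) (i j : Fin (n e - 1)),
        D (Sum.inr ⟨e, i⟩) = 1 → D (Sum.inr ⟨e, j⟩) = 1 → i = j) ∧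
    (∃ w : AdmMD V E n, inducedMD n w = D) := by
  have hedge (e : E) := eq_zero_or_eq_one_and_unique_of_lt_on_segment
    (fun i => hred.1 (Sum.inr ⟨e, i⟩) Sum.inr_ne_inl)
    (fun _ _ hab => hred.exists_lt_on_segment e hab)
  choose μ hμ using fun e => exists_zmod_val_indicator (hedge e).1 (hedge e).2
  refine ⟨fun e => (hedge e).1, fun e => (hedge e).2, ⟨⟨fun u => D (Sum.inl u), μ⟩, ?_⟩⟩
  funext x
  rcases x with u | ⟨e, i⟩
  · rfl
  · exact (hμ e i).symm

/-- a multidegree on `Γ̃` which is `v`-reduced for some `v ∈ V(Γ)` is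
admissible: on the new vertices over each edge it takes only values `0` and `1`, with
`1` occurring at most once, i.e. it is induced by an admissible multidegree. -/
theorem statement_7 {V E : Type*} [Fintype V] [Fintype E] [DecidableEq V] [DecidableEq E]
    (tail head : E → V) (n : E → ℕ)
    (hloop : Loopless tail head) (hconn : MGConnected tail head)
    (hn : ∀ e, 0 < n e)
    (D : (V ⊕ Σ e : E, Fin (n e - 1)) → ℤ) (v : V)
    (hred : VReduced (tailT tail head n) (headT tail head n) D (Sum.inl v)) :
    (∀ (e : E) (i : Fin (n e - 1)),
        D (Sum.inr ⟨e, i⟩) = 0 ∨ D (Sum.inr ⟨e, i⟩) = 1) ∧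
    (∀ (e : E) (i j : Fin (n e - 1)),
        D (Sum.inr ⟨e, i⟩) = 1 → D (Sum.inr ⟨e, j⟩) = 1 → i = j) ∧
    (∃ w : AdmMD V E n, inducedMD n w = D) :=
  statement_7_general tail head n D v hred

end LLS
end

section
/- Let w₀ be an admissible multidegree on (Γ, 𝐧) and, for each v ∈ V(Γ), let w_v ∈ V(G(w₀)) be concentrated at v. Then the graph Ḡ(w₀) is finite. Moreover, if some w = (w_Γ, μ) ∈ V(G(w₀)) satisfies w_Γ(v) ≥ 0 for all v ∈ V(Γ), then w ∈ V(Ḡ(w₀)); in particular Ḡ(w₀) is then nonempty. -/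
open scoped Classical

/-!
Twisting `x v` times at every vertex `v`, for any `x : V → ℤ`, has a closed formula
(`twistBy`): following the marker on each subdivided edge, the degree of an endpoint changes by
the number of multiples of `n e` the marker passes. Hence a path in `G(w₀)` matters only through
how often it twists at each vertex, and by a maximum principle on the connected graph two such
scripts reach the same multidegree iff they differ by a constant. So the minimal paths from `w`
to `w'` are those twisting `z u` times at each `u`, where `z ≥ 0` is the script with `min z = 0`.

If `w ∈ Ḡ(w₀)`, the minimal script from `w` to each `w_u` vanishes at `u`; comparing it with the
minimal script `z` to a fixed `w_{v₀}` bounds `z` in a box, and `w` is determined by `z`.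
If `w ≥ 0` and the minimal script `z` from `w` to `w_v` is positive at `v`, let `u` be the first
vertex with `z u = 0` in an ordering witnessing that `w_v` is concentrated at `v`. Negatively
twisting `w_v` once at each earlier vertex twists at most `z` times there and never at `u`, so
the degree at `u` stays at least `w(u) ≥ 0`, contradicting concentration.
-/

/-- `wraps N a d` counts (with sign) the multiples of `N` in `(a, a + d]`. -/
def Int.wraps (N a d : ℤ) : ℤ := (a + d) / N - a / N

namespace Int

theorem wraps_zero (N a : ℤ) : wraps N a 0 = 0 := by simp [wraps]

theorem wraps_add (N a d d' : ℤ) : wraps N a (d + d') = wraps N a d + wraps N (a + d) d' := by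
  simp only [wraps, add_assoc]
  ring

theorem wraps_congr {N a b : ℤ} (h : N ∣ a - b) (d : ℤ) : wraps N a d = wraps N b d := by
  obtain ⟨k, hk⟩ := h
  rcases eq_or_ne N 0 with rfl | hN
  · simp [wraps]
  have hb (s : ℤ) : (a + s) / N = (b + s) / N + k := by
    rw [show a + s = b + s + k * N by linarith, Int.add_mul_ediv_right _ _ hN]
  have h0 : a / N = b / N + k := by simpa using hb 0
  simp only [wraps]
  linarith [hb d]

theorem wraps_of_dvd {N : ℤ} (a : ℤ) {d : ℤ} (h : N ∣ d) : wraps N a d = d / N := by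
  simp [wraps, Int.add_ediv_of_dvd_right h]

theorem wraps_mono {N : ℤ} (hN : 0 < N) (a : ℤ) : Monotone (wraps N a) := fun d d' h => by
  have := Int.ediv_le_ediv hN (show a + d ≤ a + d' by omega)
  simp only [wraps]
  linarith

theorem wraps_one {N : ℤ} (hN : 0 < N) (a : ℤ) : wraps N a 1 = if N ∣ a + 1 then 1 else 0 := by
  have ht := Int.emod_add_mul_ediv (a + 1) N
  have hr := Int.emod_nonneg (a + 1) hN.ne'
  have hr' := Int.emod_lt_of_pos (a + 1) hN
  simp only [wraps, Int.dvd_iff_emod_eq_zero]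
  split_ifs with h
  · have : a / N = (a + 1) / N - 1 :=
      ((Int.ediv_emod_unique (r := N - 1) hN).2 ⟨by linarith, by omega, by omega⟩).1
    omega
  · have : a / N = (a + 1) / N :=
      ((Int.ediv_emod_unique (r := (a + 1) % N - 1) hN).2 ⟨by linarith, by omega, by omega⟩).1
    omega

theorem wraps_neg_one {N : ℤ} (hN : 0 < N) (a : ℤ) :
    wraps N a (-1) = -if N ∣ a then 1 else 0 := by
  have := wraps_one hN (a - 1)
  simp only [wraps, sub_add_cancel] at this ⊢
  rw [← this, ← sub_eq_add_neg]
  ring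

end Int

theorem ZMod.add_intCast_eq_zero_iff_dvd {N : ℕ} [NeZero N] (a : ZMod N) (s : ℤ) :
    a + s = 0 ↔ (N : ℤ) ∣ a.val + s := by
  rw [← ZMod.intCast_zmod_eq_zero_iff_dvd]
  push_cast
  rw [ZMod.natCast_zmod_val]

theorem Finset.sum_univ_list_count {α : Type*} [Fintype α] [DecidableEq α] (l : List α) :
    ∑ a, (l.count a : ℤ) = l.length := by
  have := Multiset.sum_count_eq_card (s := Finset.univ) (m := (l : Multiset α)) (by simp)
  simp only [Multiset.coe_count, Multiset.coe_card] at this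
  exact_mod_cast this

theorem exists_list_count_eq {α : Type*} [Fintype α] [DecidableEq α] (z : α → ℤ)
    (hz : ∀ a, 0 ≤ z a) : ∃ l : List α, ∀ a, (l.count a : ℤ) = z a := by
  refine ⟨(∑ b, Multiset.replicate (z b).toNat b).toList, fun a => ?_⟩
  rw [← Multiset.coe_count, Multiset.coe_toList, Multiset.count_sum']
  simp [Multiset.count_replicate, hz a]

namespace LLS

variable {V E : Type*}

attribute [ext] AdmMD

section Twisting

variable [DecidableEq V] {tail head : E → V} {n : E → ℕ}

/-- Lift `μ(e)` to `m ∈ [0, n e)`. Twisting `x v` times at every `v` moves the marker on the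
subdivided edge `e` to position `m + x (tail e) - x (head e)`; the head gains one for every
multiple of `n e` the marker reaches from below, the tail loses one for every multiple it leaves
upwards (and conversely when moving down). -/
noncomputable def edgeDegreeChange (tail head : E → V) (n : E → ℕ) (w : AdmMD V E n)
    (x : V → ℤ) (u : V) (e : E) : ℤ :=
  (if head e = u then Int.wraps (n e) (w.mu e).val (x (tail e) - x (head e)) else 0)
    - (if tail e = u then Int.wraps (n e) ((w.mu e).val - 1) (x (tail e) - x (head e)) else 0)

theorem edgeDegreeChange_single (hloop : Loopless tail head) (hn : ∀ e, 0 < n e)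
    (w : AdmMD V E n) (v u : V) (e : E) :
    edgeDegreeChange tail head n w (Pi.single v 1) u e
      = (if sigma tail head e v ≠ 0 ∧ w.mu e + (sigma tail head e v : ZMod (n e)) = 0 ∧
            otherEnd tail head e v = u then 1 else 0)
        - (if u = v ∧ sigma tail head e v ≠ 0 ∧ w.mu e = 0 then 1 else 0) := by
  have hN : (0 : ℤ) < n e := by exact_mod_cast hn e
  have : NeZero (n e) := ⟨(hn e).ne'⟩
  have hzero : w.mu e = 0 ↔ (n e : ℤ) ∣ (w.mu e).val := by
    simpa using ZMod.add_intCast_eq_zero_iff_dvd (w.mu e) 0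
  have hσ := ZMod.add_intCast_eq_zero_iff_dvd (w.mu e)
  by_cases ht : tail e = v
  · subst ht
    have hh : head e ≠ tail e := (hloop e).symm
    have hs : sigma tail head e (tail e) = 1 := by simp [sigma]
    have ho : otherEnd tail head e (tail e) = head e := by simp [otherEnd]
    simp only [hs, ho, hσ, hzero, eq_comm (a := u)]
    simp only [edgeDegreeChange, Pi.single_apply, hh, if_true, if_false, sub_zero,
      Int.wraps_one hN, sub_add_cancel]
    clear hσ hzero
    split_ifs <;> simp_all
  by_cases hh : head e = v
  · subst hh
    have hs : sigma tail head e (head e) = -1 := by simp [sigma, ht]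
    have ho : otherEnd tail head e (head e) = tail e := by simp [otherEnd, ht]
    simp only [hs, ho, hσ, hzero, eq_comm (a := u)]
    simp only [edgeDegreeChange, Pi.single_apply, ht, if_true, if_false, zero_sub,
      Int.wraps_neg_one hN, ← sub_eq_add_neg]
    clear hσ hzero
    split_ifs <;> simp_all
  · have hs : sigma tail head e v = 0 := by simp [sigma, ht, hh]
    simp [edgeDegreeChange, ht, hh, hs, Int.wraps_zero]

theorem edgeDegreeChange_eq_add_of_dvd {w : AdmMD V E n} {x y : V → ℤ} {e : E}
    (h : (n e : ℤ) ∣ (x - y) (tail e) - (x - y) (head e)) (u : V) :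
    edgeDegreeChange tail head n w x u e = edgeDegreeChange tail head n w y u e
      + ((if head e = u then ((x - y) (tail e) - (x - y) (head e)) / n e else 0)
        - (if tail e = u then ((x - y) (tail e) - (x - y) (head e)) / n e else 0)) := by
  have hsplit (a : ℤ) : Int.wraps (n e) a (x (tail e) - x (head e))
      = Int.wraps (n e) a (y (tail e) - y (head e))
        + ((x - y) (tail e) - (x - y) (head e)) / n e := by
    rw [← Int.wraps_of_dvd (a + (y (tail e) - y (head e))) h, ← Int.wraps_add]
    congr 1
    simp only [Pi.sub_apply]
    ring
  simp only [edgeDegreeChange, hsplit]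
  split_ifs <;> ring

variable [Fintype E]

/-- Twisting `x v` times at every vertex `v`, negative values standing for negative twists. -/
noncomputable def twistBy (tail head : E → V) (n : E → ℕ) (w : AdmMD V E n) (x : V → ℤ) :
    AdmMD V E n where
  wV u := w.wV u + ∑ e, edgeDegreeChange tail head n w x u e
  mu e := w.mu e + ((x (tail e) - x (head e) : ℤ) : ZMod (n e))

theorem twistBy_zero (w : AdmMD V E n) : twistBy tail head n w 0 = w := by
  ext <;> simp [twistBy, edgeDegreeChange, Int.wraps_zero]

theorem twistBy_add_const (w : AdmMD V E n) (x : V → ℤ) (c : ℤ) :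
    twistBy tail head n w (fun t => x t + c) = twistBy tail head n w x := by
  ext <;> simp [twistBy, edgeDegreeChange]

theorem edgeDegreeChange_add (hn : ∀ e, 0 < n e) (w : AdmMD V E n) (x y : V → ℤ) (u : V)
    (e : E) :
    edgeDegreeChange tail head n w (x + y) u e = edgeDegreeChange tail head n w x u e
      + edgeDegreeChange tail head n (twistBy tail head n w x) y u e := by
  have : NeZero (n e) := ⟨(hn e).ne'⟩
  simp only [edgeDegreeChange, Pi.add_apply]
  set m : ℤ := ((w.mu e).val : ℤ)
  set m' : ℤ := (((twistBy tail head n w x).mu e).val : ℤ)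
  set dx := x (tail e) - x (head e)
  set dy := y (tail e) - y (head e)
  have hm' : (n e : ℤ) ∣ m + dx - m' := by
    rw [← ZMod.intCast_eq_intCast_iff_dvd_sub]
    simp [m, m', dx, twistBy]
  have h0 : Int.wraps (n e) m (dx + dy) = Int.wraps (n e) m dx + Int.wraps (n e) m' dy := by
    rw [Int.wraps_add, Int.wraps_congr (a := m + dx) hm']
  have h1 : Int.wraps (n e) (m - 1) (dx + dy)
      = Int.wraps (n e) (m - 1) dx + Int.wraps (n e) (m' - 1) dy := by
    have hm'' : (n e : ℤ) ∣ m - 1 + dx - (m' - 1) := by convert hm' using 1; ring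
    rw [Int.wraps_add, Int.wraps_congr hm'']
  rw [show x (tail e) + y (tail e) - (x (head e) + y (head e)) = dx + dy by ring, h0, h1]
  split_ifs <;> ring

theorem twistBy_twistBy (hn : ∀ e, 0 < n e) (w : AdmMD V E n) (x y : V → ℤ) :
    twistBy tail head n (twistBy tail head n w x) y = twistBy tail head n w (x + y) := by
  refine AdmMD.ext (funext fun u => ?_) (funext fun e => ?_)
  · simp only [twistBy, edgeDegreeChange_add hn, Finset.sum_add_distrib]
    ring
  · simp only [twistBy, Pi.add_apply]
    push_cast
    ring

theorem twistBy_neg_of_eq (hn : ∀ e, 0 < n e) {w w' : AdmMD V E n} {z : V → ℤ}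
    (h : twistBy tail head n w z = w') : twistBy tail head n w' (-z) = w := by
  rw [← h, twistBy_twistBy hn, add_neg_cancel, twistBy_zero]

theorem twist_eq_twistBy (hloop : Loopless tail head) (hn : ∀ e, 0 < n e) (w : AdmMD V E n)
    (v : V) : twist tail head n w v = twistBy tail head n w (Pi.single v 1) := by
  refine AdmMD.ext (funext fun u => ?_) (funext fun e => ?_)
  · simp only [twist, twistBy, edgeDegreeChange_single hloop hn, Finset.sum_sub_distrib,
      Finset.card_filter]
    by_cases huv : u = v
    · simp [huv]
      ring
    · simp [huv]
  · have hσ : sigma tail head e v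
        = (Pi.single v 1 : V → ℤ) (tail e) - (Pi.single v 1 : V → ℤ) (head e) := by
      have := hloop e
      simp only [sigma, Pi.single_apply]
      split_ifs <;> simp_all
    simp [twist, twistBy, hσ]

theorem negTwist_twist (w : AdmMD V E n) (v : V) :
    negTwist tail head n (twist tail head n w v) v = w := by
  refine AdmMD.ext (funext fun u => ?_) (funext fun e => ?_)
  · simp [twist, negTwist]
    ring
  · simp [twist, negTwist]

theorem negTwist_eq_twistBy (hloop : Loopless tail head) (hn : ∀ e, 0 < n e) (w : AdmMD V E n)
    (v : V) : negTwist tail head n w v = twistBy tail head n w (Pi.single v (-1)) := by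
  have h : twist tail head n (twistBy tail head n w (Pi.single v (-1))) v = w := by
    rw [twist_eq_twistBy hloop hn, twistBy_twistBy hn, ← Pi.single_add, neg_add_cancel,
      Pi.single_zero, twistBy_zero]
  conv_lhs => rw [← h]
  exact negTwist_twist _ v

theorem foldl_eq_twistBy_count {f : AdmMD V E n → V → AdmMD V E n} (hn : ∀ e, 0 < n e) (k : ℤ)
    (hf : ∀ w v, f w v = twistBy tail head n w (Pi.single v k)) (l : List V) (w : AdmMD V E n) :
    l.foldl f w = twistBy tail head n w (fun t => k * l.count t) := by
  induction l generalizing w with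
  | nil =>
    simp only [List.foldl_nil, List.count_nil, Nat.cast_zero, mul_zero]
    exact (twistBy_zero w).symm
  | cons a l ih =>
    rw [List.foldl_cons, ih, hf, twistBy_twistBy hn]
    congr 1
    funext t
    rcases eq_or_ne t a with rfl | h
    · simp
      ring
    · simp [h, h.symm]

theorem foldl_twist_eq_twistBy (hloop : Loopless tail head) (hn : ∀ e, 0 < n e) (l : List V)
    (w : AdmMD V E n) :
    l.foldl (twist tail head n) w = twistBy tail head n w (fun t => l.count t) := by
  simpa using foldl_eq_twistBy_count hn 1 (twist_eq_twistBy hloop hn) l w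

theorem foldl_negTwist_eq_twistBy (hloop : Loopless tail head) (hn : ∀ e, 0 < n e)
    (l : List V) (w : AdmMD V E n) :
    l.foldl (negTwist tail head n) w = twistBy tail head n w (fun t => -l.count t) := by
  simpa using foldl_eq_twistBy_count hn (-1) (negTwist_eq_twistBy hloop hn) l w

theorem twistBy_wV_le_twistBy_wV (hn : ∀ e, 0 < n e) (w : AdmMD V E n) {x y : V → ℤ} {u : V}
    (h : ∀ t, y u - y t ≤ x u - x t) :
    (twistBy tail head n w x).wV u ≤ (twistBy tail head n w y).wV u := by
  simp only [twistBy, add_le_add_iff_left]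
  refine Finset.sum_le_sum fun e _ => ?_
  have hN : (0 : ℤ) < n e := by exact_mod_cast hn e
  have hhead : head e = u → Int.wraps (n e) (w.mu e).val (x (tail e) - x (head e))
      ≤ Int.wraps (n e) (w.mu e).val (y (tail e) - y (head e)) := fun he =>
    Int.wraps_mono hN _ (by subst he; linarith [h (tail e)])
  have htail : tail e = u → Int.wraps (n e) ((w.mu e).val - 1) (y (tail e) - y (head e))
      ≤ Int.wraps (n e) ((w.mu e).val - 1) (x (tail e) - x (head e)) := fun he =>
    Int.wraps_mono hN _ (by subst he; linarith [h (head e)])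
  simp only [edgeDegreeChange]
  split_ifs with h1 h2 h2
  · linarith [hhead h1, htail h2]
  · linarith [hhead h1]
  · linarith [htail h2]
  · rfl

noncomputable def netInflow (tail head : E → V) (n : E → ℕ) (ξ : V → ℤ) (u : V) : ℤ :=
  ∑ e, ((if head e = u then (ξ (tail e) - ξ (head e)) / n e else 0)
    - (if tail e = u then (ξ (tail e) - ξ (head e)) / n e else 0))

theorem twistBy_wV_eq_add_netInflow {w : AdmMD V E n} {x y : V → ℤ}
    (h : ∀ e, (n e : ℤ) ∣ (x - y) (tail e) - (x - y) (head e)) (u : V) :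
    (twistBy tail head n w x).wV u
      = (twistBy tail head n w y).wV u + netInflow tail head n (x - y) u := by
  simp only [twistBy, netInflow, edgeDegreeChange_eq_add_of_dvd (h _), Finset.sum_add_distrib]
  ring

/-- Maximum principle: at a maximum of `ξ` every summand of the net inflow is `≤ 0`, so all of
them vanish, and divisibility then makes `ξ` constant across the edges there. -/
theorem MGConnected.eq_of_netInflow_eq_zero [Finite V] (hconn : MGConnected tail head)
    {ξ : V → ℤ} (hdvd : ∀ e, (n e : ℤ) ∣ ξ (tail e) - ξ (head e))
    (hξ : ∀ u, netInflow tail head n ξ u = 0) (u v : V) : ξ u = ξ v := by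
  have : Nonempty V := ⟨u⟩
  obtain ⟨a, ha⟩ := Finite.exists_max ξ
  set flow : E → ℤ := fun e => (ξ (tail e) - ξ (head e)) / n e
  have hstep (b c : V) (hb : ξ b = ξ a)
      (hbc : ∃ e, (tail e = b ∧ head e = c) ∨ (tail e = c ∧ head e = b)) : ξ c = ξ a := by
    have hout (e : E) (he : tail e = b) : 0 ≤ flow e :=
      Int.ediv_nonneg (by rw [he, hb]; linarith [ha (head e)]) (by positivity)
    have hin (e : E) (he : head e = b) : flow e ≤ 0 := by
      have : 0 ≤ (-(ξ (tail e) - ξ (head e))) / n e :=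
        Int.ediv_nonneg (by rw [he, hb]; linarith [ha (tail e)]) (by positivity)
      rw [Int.neg_ediv_of_dvd (hdvd e)] at this
      linarith
    have hterm (e : E) :
        (if head e = b then flow e else 0) - (if tail e = b then flow e else 0) ≤ 0 := by
      split_ifs with h1 h2 h2
      · simp
      · linarith [hin e h1]
      · linarith [hout e h2]
      · simp
    have hzero := (Finset.sum_eq_zero_iff_of_nonpos (fun e _ => hterm e)).1 (hξ b)
    obtain ⟨e, he⟩ := hbc
    rcases eq_or_ne c b with rfl | hcb
    · exact hb
    have hflow : flow e = 0 := by
      have := hzero e (Finset.mem_univ e)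
      rcases he with ⟨ht, hh⟩ | ⟨ht, hh⟩ <;> simpa [ht, hh, hcb] using this
    have := Int.eq_zero_of_ediv_eq_zero (hdvd e) hflow
    rcases he with ⟨rfl, rfl⟩ | ⟨rfl, rfl⟩ <;> linarith
  have hreach (t : V) : ξ t = ξ a := by
    induction hconn a t with
    | refl => rfl
    | tail _ hbc ih => exact hstep _ _ ih hbc
  rw [hreach u, hreach v]

theorem exists_eq_add_const_of_twistBy_eq [Finite V] (hconn : MGConnected tail head)
    {w : AdmMD V E n} {x y : V → ℤ} (h : twistBy tail head n w x = twistBy tail head n w y) :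
    ∃ c, ∀ u, x u = y u + c := by
  have hdvd (e : E) : (n e : ℤ) ∣ (x - y) (tail e) - (x - y) (head e) := by
    have := congrArg (·.mu e) h
    simp only [twistBy] at this
    rw [← ZMod.intCast_eq_intCast_iff_dvd_sub, eq_comm]
    have := add_left_cancel this
    push_cast [Pi.sub_apply] at this ⊢
    linear_combination this
  have hξ (u : V) : netInflow tail head n (x - y) u = 0 := by
    have := twistBy_wV_eq_add_netInflow (w := w) hdvd u
    rw [h] at this
    linarith
  rcases isEmpty_or_nonempty V with _ | ⟨⟨a⟩⟩
  · exact ⟨0, fun u => isEmptyElim u⟩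
  · refine ⟨x a - y a, fun u => ?_⟩
    have := hconn.eq_of_netInflow_eq_zero hdvd hξ u a
    simp only [Pi.sub_apply] at this
    linarith

end Twisting

section MinimalPaths

variable [Fintype E] [DecidableEq V] {tail head : E → V} {n : E → ℕ}

theorem exists_twistBy_eq_of_twistSeq [Finite V] [Nonempty V] (hloop : Loopless tail head)
    (hn : ∀ e, 0 < n e) {w₀ w w' : AdmMD V E n} (hw : TwistSeq tail head n w₀ w)
    (hw' : TwistSeq tail head n w₀ w') :
    ∃ z : V → ℤ, twistBy tail head n w z = w' ∧ (∀ u, 0 ≤ z u) ∧ ∃ u₀, z u₀ = 0 := by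
  obtain ⟨l, rfl⟩ := hw
  obtain ⟨l', rfl⟩ := hw'
  set ζ : V → ℤ := fun t => l'.count t - l.count t
  obtain ⟨u₀, hu₀⟩ := Finite.exists_min ζ
  refine ⟨fun t => ζ t + -ζ u₀, ?_, fun u => by linarith [hu₀ u], u₀, add_neg_cancel _⟩
  rw [twistBy_add_const, foldl_twist_eq_twistBy hloop hn, foldl_twist_eq_twistBy hloop hn,
    twistBy_twistBy hn]
  congr 1
  funext t
  simp [ζ]

theorem isMinPath_iff_count_eq [Fintype V] (hloop : Loopless tail head)
    (hconn : MGConnected tail head) (hn : ∀ e, 0 < n e) {w w' : AdmMD V E n} {z : V → ℤ}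
    (hz : twistBy tail head n w z = w') (hz0 : ∀ u, 0 ≤ z u) {u₀ : V} (hu₀ : z u₀ = 0)
    {l : List V} : IsMinPath tail head n w w' l ↔ ∀ u, (l.count u : ℤ) = z u := by
  have hpath (l' : List V) (hl' : l'.foldl (twist tail head n) w = w') :
      ∃ c, 0 ≤ c ∧ ∀ u, (l'.count u : ℤ) = z u + c := by
    rw [foldl_twist_eq_twistBy hloop hn, ← hz] at hl'
    obtain ⟨c, hc⟩ := exists_eq_add_const_of_twistBy_eq hconn hl'
    refine ⟨c, ?_, hc⟩
    have := hc u₀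
    rw [hu₀] at this
    omega
  have hfold (l' : List V) (hl' : ∀ u, (l'.count u : ℤ) = z u) :
      l'.foldl (twist tail head n) w = w' := by
    rw [foldl_twist_eq_twistBy hloop hn, funext hl', hz]
  have hlength (l' : List V) : (l'.length : ℤ) = ∑ u, (l'.count u : ℤ) :=
    (Finset.sum_univ_list_count l').symm
  constructor
  · rintro ⟨hl, hmin⟩
    obtain ⟨c, hc0, hc⟩ := hpath l hl
    obtain ⟨l₀, hl₀⟩ := exists_list_count_eq z hz0
    have hle : (l.length : ℤ) ≤ l₀.length := by exact_mod_cast hmin l₀ (hfold l₀ hl₀)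
    simp only [hlength, hc, hl₀, Finset.sum_add_distrib, Finset.sum_const, Finset.card_univ,
      nsmul_eq_mul] at hle
    have hcard : (0 : ℤ) < Fintype.card V := by exact_mod_cast Fintype.card_pos_iff.2 ⟨u₀⟩
    have hc0' : c = 0 := by nlinarith
    intro u
    rw [hc u, hc0', add_zero]
  · intro hl
    refine ⟨hfold l hl, fun l' hl' => ?_⟩
    obtain ⟨c, hc0, hc⟩ := hpath l' hl'
    have : (l.length : ℤ) ≤ l'.length := by
      rw [hlength, hlength]
      exact Finset.sum_le_sum fun u _ => by rw [hl, hc]; linarith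
    exact_mod_cast this

theorem InBarG.exists_twistBy_eq [Fintype V] (hloop : Loopless tail head)
    (hconn : MGConnected tail head) (hn : ∀ e, 0 < n e) {w₀ w : AdmMD V E n}
    {wv : V → AdmMD V E n} (hw : InBarG tail head n w₀ wv w) {u : V}
    (hu : TwistSeq tail head n w₀ (wv u)) :
    ∃ z : V → ℤ, twistBy tail head n w z = wv u ∧ (∀ t, 0 ≤ z t) ∧ z u = 0 := by
  have : Nonempty V := ⟨u⟩
  obtain ⟨z, hz, hz0, u₀, hu₀⟩ := exists_twistBy_eq_of_twistSeq hloop hn hw.1 hu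
  obtain ⟨l, hl⟩ := exists_list_count_eq z hz0
  have hmin := (isMinPath_iff_count_eq hloop hconn hn hz hz0 hu₀).2 hl
  refine ⟨z, hz, hz0, ?_⟩
  rw [← hl u, List.count_eq_zero_of_not_mem (hw.2 u l hmin), Nat.cast_zero]

theorem exists_wV_neg_of_concentrated (hloop : Loopless tail head) (hn : ∀ e, 0 < n e)
    {w w' : AdmMD V E n} {z : V → ℤ} (hz : twistBy tail head n w z = w') (hz0 : ∀ t, 0 ≤ z t)
    {v u₀ : V} (hv : 0 < z v) (hu₀ : z u₀ = 0) (hconc : Concentrated tail head n w' v) :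
    ∃ u, w.wV u < 0 := by
  obtain ⟨L, hnd, hall, hhead, hneg⟩ := hconc
  set i := L.findIdx (fun t => decide (z t = 0))
  have hi : i < L.length := List.findIdx_lt_length_of_exists ⟨u₀, hall u₀, by simpa using hu₀⟩
  have hzi : z L[i] = 0 := by simpa using List.findIdx_getElem (w := hi)
  have hpre (t : V) (ht : t ∈ L.take i) : z t ≠ 0 := by
    obtain ⟨j, hj, rfl⟩ := List.mem_take_iff_getElem.1 ht
    simpa using List.not_of_lt_findIdx (lt_of_lt_of_le hj (min_le_left _ _))
  have hi0 : 0 < i := by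
    obtain ⟨L', rfl⟩ := List.head?_eq_some_iff.1 hhead
    simp [i, List.findIdx_cons, hv.ne']
  have hcount (t : V) : ((L.take i).count t : ℤ) ≤ z t := by
    by_cases ht : t ∈ L.take i
    · have := List.nodup_iff_count_le_one.1 (hnd.sublist (List.take_sublist i L)) t
      have := hpre t ht
      have := hz0 t
      omega
    · rw [List.count_eq_zero_of_not_mem ht]
      exact_mod_cast hz0 t
  have hcount_i : (L.take i).count L[i] = 0 :=
    List.count_eq_zero_of_not_mem fun h => hpre _ h hzi
  refine ⟨L[i], ?_⟩
  calc w.wV L[i] = (twistBy tail head n w' (-z)).wV L[i] := by rw [twistBy_neg_of_eq hn hz]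
    _ ≤ (twistBy tail head n w' (fun t => -((L.take i).count t : ℤ))).wV L[i] :=
      twistBy_wV_le_twistBy_wV hn w' fun t => by
        simp only [Pi.neg_apply, hcount_i, hzi, Nat.cast_zero]
        linarith [hcount t]
    _ = ((L.take i).foldl (negTwist tail head n) w').wV L[i] := by
      rw [foldl_negTwist_eq_twistBy hloop hn]
    _ < 0 := hneg i hi hi0

theorem inBarG_of_nonneg [Fintype V] (hloop : Loopless tail head)
    (hconn : MGConnected tail head) (hn : ∀ e, 0 < n e) {w₀ : AdmMD V E n}
    {wv : V → AdmMD V E n}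
    (hwv : ∀ v, TwistSeq tail head n w₀ (wv v) ∧ Concentrated tail head n (wv v) v)
    {w : AdmMD V E n} (hw : TwistSeq tail head n w₀ w) (hw0 : ∀ v, 0 ≤ w.wV v) :
    InBarG tail head n w₀ wv w := by
  refine ⟨hw, fun v l hl hvl => ?_⟩
  have : Nonempty V := ⟨v⟩
  obtain ⟨z, hz, hz0, u₀, hu₀⟩ := exists_twistBy_eq_of_twistSeq hloop hn hw (hwv v).1
  have hzv : 0 < z v := by
    rw [← (isMinPath_iff_count_eq hloop hconn hn hz hz0 hu₀).1 hl v]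
    exact_mod_cast List.count_pos_iff.2 hvl
  obtain ⟨u, hu⟩ := exists_wV_neg_of_concentrated hloop hn hz hz0 hzv hu₀ (hwv v).2
  exact (hw0 u).not_gt hu

theorem finite_setOf_inBarG [Fintype V] (hloop : Loopless tail head)
    (hconn : MGConnected tail head) (hn : ∀ e, 0 < n e) {w₀ : AdmMD V E n}
    {wv : V → AdmMD V E n} (hwv : ∀ v, TwistSeq tail head n w₀ (wv v)) :
    {w | InBarG tail head n w₀ wv w}.Finite := by
  rcases isEmpty_or_nonempty V with _ | _
  · exact Set.Subsingleton.finite fun a _ b _ =>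
      AdmMD.ext (funext isEmptyElim) (funext fun e => isEmptyElim (tail e))
  have v₀ : V := Classical.arbitrary V
  choose δ hδ using fun u => exists_twistBy_eq_of_twistSeq hloop hn (hwv v₀) (hwv u)
  refine ((Set.finite_Icc (0 : V → ℤ) fun u => δ u v₀ - δ u u).image
    fun z => twistBy tail head n (wv v₀) (-z)).subset fun w hw => ?_
  obtain ⟨z, hz, hz0, hzv₀⟩ := hw.exists_twistBy_eq hloop hconn hn (hwv v₀)
  refine ⟨z, ⟨hz0, fun u => show z u ≤ δ u v₀ - δ u u from ?_⟩, twistBy_neg_of_eq hn hz⟩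
  obtain ⟨zu, hzu, hzu0, hzuu⟩ := hw.exists_twistBy_eq hloop hconn hn (hwv u)
  have : twistBy tail head n w zu = twistBy tail head n w (z + δ u) := by
    rw [hzu, ← twistBy_twistBy hn, hz, (hδ u).1]
  obtain ⟨c, hc⟩ := exists_eq_add_const_of_twistBy_eq hconn this
  have h1 := hc u
  have h2 := hc v₀
  simp only [Pi.add_apply] at h1 h2
  linarith [hzu0 v₀]

end MinimalPaths

theorem statement_9_general {V E : Type*} [Fintype V] [Fintype E] [DecidableEq V]
    (tail head : E → V) (n : E → ℕ)
    (hloop : Loopless tail head) (hconn : MGConnected tail head)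
    (hn : ∀ e, 0 < n e)
    (w₀ : AdmMD V E n) (wv : V → AdmMD V E n)
    (hwv : ∀ v : V, TwistSeq tail head n w₀ (wv v) ∧ Concentrated tail head n (wv v) v) :
    {w : AdmMD V E n | InBarG tail head n w₀ wv w}.Finite ∧
    (∀ w : AdmMD V E n, TwistSeq tail head n w₀ w → (∀ v : V, 0 ≤ w.wV v) →
      InBarG tail head n w₀ wv w) ∧
    ((∃ w : AdmMD V E n, TwistSeq tail head n w₀ w ∧ ∀ v : V, 0 ≤ w.wV v) →
      ∃ w : AdmMD V E n, InBarG tail head n w₀ wv w) := by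
  have hnonneg (w : AdmMD V E n) (hw : TwistSeq tail head n w₀ w) (hw0 : ∀ v, 0 ≤ w.wV v) :=
    inBarG_of_nonneg hloop hconn hn hwv hw hw0
  refine ⟨finite_setOf_inBarG hloop hconn hn fun v => (hwv v).1, hnonneg, ?_⟩
  rintro ⟨w, hw, hw0⟩
  exact ⟨w, hnonneg w hw hw0⟩

/-- `Ḡ(w₀)` is finite; any everywhere-nonnegative `w ∈ V(G(w₀))` lies in
`Ḡ(w₀)`, so `Ḡ(w₀)` is nonempty when such `w` exists. -/
theorem statement_9 {V E : Type*} [Fintype V] [Fintype E] [DecidableEq V] [DecidableEq E]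
    (tail head : E → V) (n : E → ℕ)
    (hloop : Loopless tail head) (hconn : MGConnected tail head)
    (hn : ∀ e, 0 < n e)
    (w₀ : AdmMD V E n) (wv : V → AdmMD V E n)
    (hwv : ∀ v : V, TwistSeq tail head n w₀ (wv v) ∧ Concentrated tail head n (wv v) v) :
    {w : AdmMD V E n | InBarG tail head n w₀ wv w}.Finite ∧
    (∀ w : AdmMD V E n, TwistSeq tail head n w₀ w → (∀ v : V, 0 ≤ w.wV v) →
      InBarG tail head n w₀ wv w) ∧
    ((∃ w : AdmMD V E n, TwistSeq tail head n w₀ w ∧ ∀ v : V, 0 ≤ w.wV v) →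
      ∃ w : AdmMD V E n, InBarG tail head n w₀ wv w) :=
  statement_9_general tail head n hloop hconn hn w₀ wv hwv

end LLS
end
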